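/- arXiv:2508.14803 — 2 statements merged into one kernel-verified Lean document; each statement's English description precedes it below -/
import Mathlib

section
/- Let 2 ≤ ℓ ≤ m and 0 ≤ p ≠ q < 2^m with |φ(p) - φ(q)| < 2^{-ℓ+1}, where φ(n) = Σ n_i 2^{-i} for the binary digits n_i of n (n = Σ n_i 2^{i-1}). Then the XOR vector (p ⊕ q) restricted to digit positions 1 through ℓ-1 is either all zeros, all ones, or of the form (0,...,0,1,...,1) (a block of zeros followed by a block of ones). -/
open Finset

/-!
Let `k` be the first digit position at which `p` and `q` differ, say `p_k = 0` and `q_k = 1`.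
Then `φ(q) - φ(p) ≥ 2^{-k} - Σ_{k < i ≤ m, i ≠ j} 2^{-i} ≥ 2^{-j}` as soon as the digits agree at
some later position `j ≤ m`. Closeness of `φ(p)` and `φ(q)` therefore forces `p` and `q` to
differ at every position from `k` up to `ℓ - 1`.
-/

/-- The `i`-th binary digit of `n` (1-indexed: `n = Σ nᵢ 2^(i-1)`). -/
def bit (n i : ℕ) : ℕ := if Nat.testBit n (i-1) then 1 else 0

/-- `φ` of the digit vector of `n` truncated to `m` digits: `Σ nᵢ 2^(-i)`. -/
noncomputable def phi (m n : ℕ) : ℝ :=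
  ∑ i ∈ Finset.Icc 1 m, (bit n i : ℝ) * (2:ℝ) ^ (-(i:ℤ))

/-- The `i`-th coordinate of `P_m · (digit vector of n)` over `F₂`, where
`P_m[i][j] = C(j-1, i-1) mod 2` is the upper-triangular Pascal matrix. -/
def pbit (m n i : ℕ) : ℕ :=
  (∑ j ∈ Finset.Icc 1 m, (Nat.choose (j-1) (i-1) % 2) * bit n j) % 2

/-- `φ(P_m · n)`. -/
noncomputable def phiP (m n : ℕ) : ℝ :=
  ∑ i ∈ Finset.Icc 1 m, (pbit m n i : ℝ) * (2:ℝ) ^ (-(i:ℤ))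

/-- The `n`-th point of the two-dimensional Sobol' sequence (with `n < 2^m`). -/
noncomputable def sobol (m n : ℕ) : ℝ × ℝ := (phi m n, phiP m n)

/-- ℓ^∞ distance on ℝ². -/
noncomputable def linf (a b : ℝ × ℝ) : ℝ := max |a.1 - b.1| |a.2 - b.2|

/-- ℓ^∞ separation radius of the first `N` Sobol' points (digit length `m`). -/
noncomputable def sep (m N : ℕ) : ℝ :=
  (1/2) * sInf {d : ℝ | ∃ p q : ℕ, p < N ∧ q < N ∧ p ≠ q ∧ d = linf (sobol m p) (sobol m q)}

/-- ℓ^∞ covering radius of the first `N` Sobol' points (digit length `m`). -/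
noncomputable def cov (m N : ℕ) : ℝ :=
  sSup {r : ℝ | ∃ x : ℝ × ℝ, x.1 ∈ Set.Icc (0:ℝ) 1 ∧ x.2 ∈ Set.Icc (0:ℝ) 1 ∧
    r = sInf {d : ℝ | ∃ n : ℕ, n < N ∧ d = linf x (sobol m n)}}

lemma bit_le_one (n i : ℕ) : bit n i ≤ 1 := by
  unfold bit; split <;> simp

lemma bit_eq_zero_or_eq_one (n i : ℕ) : bit n i = 0 ∨ bit n i = 1 := by
  unfold bit; split <;> simp

lemma bit_xor_eq_zero_iff {p q i : ℕ} : bit (p ^^^ q) i = 0 ↔ bit p i = bit q i := by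
  unfold bit
  rw [Nat.testBit_xor]
  cases Nat.testBit p (i - 1) <;> cases Nat.testBit q (i - 1) <;> simp

lemma bit_xor_eq_one_iff {p q i : ℕ} : bit (p ^^^ q) i = 1 ↔ bit p i ≠ bit q i := by
  rw [Ne, ← bit_xor_eq_zero_iff]
  rcases bit_eq_zero_or_eq_one (p ^^^ q) i with h | h <;> simp [h]

lemma sum_Ioc_two_zpow_neg {a b : ℕ} (hab : a ≤ b) :
    ∑ i ∈ Ioc a b, (2:ℝ) ^ (-(i:ℤ)) = 2 ^ (-(a:ℤ)) - 2 ^ (-(b:ℤ)) := by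
  induction b, hab using Nat.le_induction with
  | base => simp
  | succ n hn ih =>
    rw [Finset.sum_Ioc_succ_top (by omega), ih]
    have : (2:ℝ) ^ (-((n + 1 : ℕ) : ℤ)) = 2 ^ (-(n:ℤ)) / 2 := by
      rw [Nat.cast_succ, neg_add, zpow_add₀ two_ne_zero, zpow_neg_one, div_eq_mul_inv]
    rw [this]
    ring

lemma phi_sub_phi (m p q : ℕ) :
    phi m q - phi m p = ∑ i ∈ Icc 1 m, ((bit q i : ℝ) - bit p i) * 2 ^ (-(i:ℤ)) := by
  unfold phi
  rw [← Finset.sum_sub_distrib]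
  exact Finset.sum_congr rfl fun i _ => by ring

lemma two_zpow_neg_le_phi_sub_phi {m p q k j : ℕ} (hk : 1 ≤ k) (hkj : k < j) (hjm : j ≤ m)
    (hlow : ∀ i ∈ Ico 1 k, bit p i = bit q i) (hpk : bit p k = 0) (hqk : bit q k = 1)
    (hj : bit p j = bit q j) :
    (2:ℝ) ^ (-(j:ℤ)) ≤ phi m q - phi m p := by
  set w : ℕ → ℝ := fun i => 2 ^ (-(i:ℤ))
  have hw : ∀ i, 0 < w i := fun i => zpow_pos two_pos _
  -- Adding `w i` for every `i > k` makes every term nonnegative.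
  set f : ℕ → ℝ := fun i => ((bit q i : ℝ) - bit p i) * w i + if k < i then w i else 0
  have hf : ∀ i ∈ Icc 1 m, 0 ≤ f i := by
    intro i hi
    rw [Finset.mem_Icc] at hi
    rcases lt_trichotomy i k with hik | rfl | hki
    · simp [f, hlow i (Finset.mem_Ico.2 ⟨hi.1, hik⟩), hik.not_gt]
    · simp [f, hpk, hqk, (hw i).le]
    · have hp1 : (bit p i : ℝ) ≤ 1 := by exact_mod_cast bit_le_one p i
      have hq0 : (0:ℝ) ≤ bit q i := Nat.cast_nonneg _
      have : f i = ((bit q i : ℝ) - bit p i + 1) * w i := by simp [f, hki]; ring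
      rw [this]
      exact mul_nonneg (by linarith) (hw i).le
  have hpair : w k + w j ≤ ∑ i ∈ Icc 1 m, f i := by
    have hsub : ({k, j} : Finset ℕ) ⊆ Icc 1 m := by
      intro x hx
      rw [Finset.mem_insert, Finset.mem_singleton] at hx
      rw [Finset.mem_Icc]
      omega
    have := Finset.sum_le_sum_of_subset_of_nonneg hsub fun i hi _ => hf i hi
    rwa [Finset.sum_pair hkj.ne, show f k = w k by simp [f, hpk, hqk],
      show f j = w j by simp [f, hkj, hj]] at this
  have hfilter : (Icc 1 m).filter (k < ·) = Ioc k m := by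
    ext i
    simp only [Finset.mem_filter, Finset.mem_Icc, Finset.mem_Ioc]
    omega
  have hsum : ∑ i ∈ Icc 1 m, f i = (phi m q - phi m p) + (w k - w m) := by
    simp only [f]
    rw [Finset.sum_add_distrib, ← Finset.sum_filter, hfilter, phi_sub_phi,
      sum_Ioc_two_zpow_neg (by omega)]
  linarith [hw m]

lemma two_zpow_neg_le_abs_phi_sub_phi {m p q k j : ℕ} (hk : 1 ≤ k) (hkj : k < j) (hjm : j ≤ m)
    (hlow : ∀ i ∈ Ico 1 k, bit p i = bit q i) (hk_ne : bit p k ≠ bit q k)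
    (hj : bit p j = bit q j) :
    (2:ℝ) ^ (-(j:ℤ)) ≤ |phi m q - phi m p| := by
  rcases bit_eq_zero_or_eq_one p k with hpk | hpk <;>
    rcases bit_eq_zero_or_eq_one q k with hqk | hqk
  · exact absurd (hpk.trans hqk.symm) hk_ne
  · exact (two_zpow_neg_le_phi_sub_phi hk hkj hjm hlow hpk hqk hj).trans (le_abs_self _)
  · rw [abs_sub_comm]
    exact (two_zpow_neg_le_phi_sub_phi hk hkj hjm (fun i hi => (hlow i hi).symm) hqk hpk
      hj.symm).trans (le_abs_self _)
  · exact absurd (hpk.trans hqk.symm) hk_ne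

lemma zeros_then_ones {x : ℕ → ℕ} {L : ℕ} (hx : ∀ i, x i = 0 ∨ x i = 1)
    (hmono : ∀ k j, 1 ≤ k → k < j → j ≤ L → (∀ i ∈ Ico 1 k, x i = 0) → x k = 1 → x j = 1) :
    (∀ i ∈ Icc 1 L, x i = 0) ∨ (∀ i ∈ Icc 1 L, x i = 1) ∨
    (∃ k, 2 ≤ k ∧ k ≤ L ∧ (∀ i ∈ Icc 1 (k - 1), x i = 0) ∧ (∀ i ∈ Icc k L, x i = 1)) := by
  by_cases hzero : ∀ i ∈ Icc 1 L, x i = 0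
  · exact Or.inl hzero
  have hone : ∃ i, i ∈ Icc 1 L ∧ x i = 1 := by
    push Not at hzero
    obtain ⟨i, hi, hxi⟩ := hzero
    exact ⟨i, hi, (hx i).resolve_left hxi⟩
  classical
  obtain ⟨hk, hxk⟩ := Nat.find_spec hone
  set k := Nat.find hone
  rw [Finset.mem_Icc] at hk
  have hbelow : ∀ i ∈ Ico 1 k, x i = 0 := by
    intro i hi
    rw [Finset.mem_Ico] at hi
    refine (hx i).resolve_right fun h => Nat.find_min hone hi.2 ⟨?_, h⟩
    rw [Finset.mem_Icc]
    omega
  have habove : ∀ i ∈ Icc k L, x i = 1 := by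
    intro i hi
    rw [Finset.mem_Icc] at hi
    rcases hi.1.eq_or_lt with rfl | hki
    · exact hxk
    · exact hmono k i hk.1 hki hi.2 hbelow hxk
  rcases hk.1.eq_or_lt with hk1 | hk1
  · exact Or.inr (Or.inl (hk1 ▸ habove))
  · refine Or.inr (Or.inr ⟨k, hk1, hk.2, fun i hi => hbelow i ?_, habove⟩)
    rw [Finset.mem_Icc] at hi
    rw [Finset.mem_Ico]
    omega

theorem stmt_9_general (ℓ m p q : ℕ) (hℓm : ℓ ≤ m)
    (h1 : |phi m q - phi m p| < (2:ℝ) ^ (-(ℓ:ℤ) + 1)) :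
    (∀ i ∈ Finset.Icc 1 (ℓ - 1), bit (p ^^^ q) i = 0) ∨
    (∀ i ∈ Finset.Icc 1 (ℓ - 1), bit (p ^^^ q) i = 1) ∨
    (∃ k, 2 ≤ k ∧ k ≤ ℓ - 1 ∧
      (∀ i ∈ Finset.Icc 1 (k - 1), bit (p ^^^ q) i = 0) ∧
      (∀ i ∈ Finset.Icc k (ℓ - 1), bit (p ^^^ q) i = 1)) := by
  refine zeros_then_ones (bit_eq_zero_or_eq_one _) fun k j hk hkj hjℓ hlow hxk => ?_
  by_contra hxj
  have hj : bit p j = bit q j :=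
    bit_xor_eq_zero_iff.1 ((bit_eq_zero_or_eq_one _ j).resolve_right hxj)
  have hfar := two_zpow_neg_le_abs_phi_sub_phi (m := m) hk hkj (by omega)
    (fun i hi => bit_xor_eq_zero_iff.1 (hlow i hi)) (bit_xor_eq_one_iff.1 hxk) hj
  have hj_le : (2:ℝ) ^ (-(ℓ:ℤ) + 1) ≤ 2 ^ (-(j:ℤ)) :=
    zpow_le_zpow_right₀ one_le_two (by omega)
  linarith

theorem stmt_9 (ℓ m p q : ℕ) (hℓ : 2 ≤ ℓ) (hℓm : ℓ ≤ m)
    (hp : p < 2 ^ m) (hq : q < 2 ^ m) (hpq : p ≠ q)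
    (h1 : |phi m q - phi m p| < (2:ℝ) ^ (-(ℓ:ℤ) + 1)) :
    (∀ i ∈ Finset.Icc 1 (ℓ - 1), bit (p ^^^ q) i = 0) ∨
    (∀ i ∈ Finset.Icc 1 (ℓ - 1), bit (p ^^^ q) i = 1) ∨
    (∃ k, 2 ≤ k ∧ k ≤ ℓ - 1 ∧
      (∀ i ∈ Finset.Icc 1 (k - 1), bit (p ^^^ q) i = 0) ∧
      (∀ i ∈ Finset.Icc k (ℓ - 1), bit (p ^^^ q) i = 1)) :=
  stmt_9_general ℓ m p q hℓm h1
end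

section
/- Let v > w ≥ 0, V = 2^v, W = 2^w, and m ≥ V + W. For p = 2^{V+W-1} + 2^{W-1}, the p-th point of the two-dimensional Sobol' sequence is x_p = (2^{-W} + 2^{-V-W}, 2^{-V} - 2^{-V-W}). -/
open Finset

/-!
The index `2 ^ (V + W - 1) + 2 ^ (W - 1)` has exactly two binary digits, in positions `W` and
`V + W`. This gives the first coordinate, and makes the `i`-th digit of the second coordinate the
parity of `C(W - 1, i - 1) + C(V + W - 1, i - 1)`. By Lucas's theorem `C(W - 1, k)` is odd exactly
for `k < W`, and `C(V + W - 1, k) ≡ C(1, ⌊k / V⌋) C(W - 1, k mod V) (mod 2)`, so the sum is odd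
exactly for `V ≤ k < V + W`: the second coordinate is `∑_{i = V + 1}^{V + W} 2^(-i)`.
-/

namespace Nat

theorem choose_pow_mul_add_modEq {p : ℕ} [Fact p.Prime] (a n k : ℕ) {s t : ℕ}
    (hs : s < p ^ a) (ht : t < p ^ a) :
    choose (p ^ a * n + s) (p ^ a * k + t) ≡ choose n k * choose s t [MOD p] := by
  induction a generalizing s t with
  | zero => simp_all [Nat.ModEq.refl]
  | succ a ih =>
    have hp : 0 < p := (Fact.out : p.Prime).pos
    have hdiv : ∀ {r c : ℕ}, (p ^ (a + 1) * c + r) / p = p ^ a * c + r / p := fun {r c} => by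
      rw [pow_succ', mul_assoc, Nat.mul_add_div hp]
    have hmod : ∀ {r c : ℕ}, (p ^ (a + 1) * c + r) % p = r % p := fun {r c} => by
      rw [pow_succ', mul_assoc, Nat.mul_add_mod]
    have hs' : s / p < p ^ a := Nat.div_lt_of_lt_mul (by rwa [← pow_succ'])
    have ht' : t / p < p ^ a := Nat.div_lt_of_lt_mul (by rwa [← pow_succ'])
    calc choose (p ^ (a + 1) * n + s) (p ^ (a + 1) * k + t)
        ≡ choose (s % p) (t % p) * choose (p ^ a * n + s / p) (p ^ a * k + t / p) [MOD p] := by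
          simpa only [hdiv, hmod] using Choose.choose_modEq_choose_mod_mul_choose_div_nat (p := p)
            (n := p ^ (a + 1) * n + s) (k := p ^ (a + 1) * k + t)
      _ ≡ choose (s % p) (t % p) * (choose n k * choose (s / p) (t / p)) [MOD p] :=
          (ih hs' ht').mul_left _
      _ = choose n k * (choose (s % p) (t % p) * choose (s / p) (t / p)) := by ring
      _ ≡ choose n k * choose s t [MOD p] :=
          Choose.choose_modEq_choose_mod_mul_choose_div_nat.symm.mul_left _

theorem choose_two_pow_sub_one_mod_two (w k : ℕ) :
    choose (2 ^ w - 1) k % 2 = if k < 2 ^ w then 1 else 0 := by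
  induction w generalizing k with
  | zero => rcases k with _ | k <;> simp
  | succ w ih =>
    have hW : 1 ≤ 2 ^ w := Nat.one_le_two_pow
    have hlucas := Choose.choose_modEq_choose_mod_mul_choose_div_nat (p := 2)
      (n := 2 ^ (w + 1) - 1) (k := k)
    have hmod : (2 ^ (w + 1) - 1) % 2 = 1 := by rw [pow_succ]; omega
    have hdiv : (2 ^ (w + 1) - 1) / 2 = 2 ^ w - 1 := by rw [pow_succ]; omega
    have hone : choose 1 (k % 2) = 1 := by
      rcases Nat.mod_two_eq_zero_or_one k with h | h <;> simp [h]
    rw [Nat.ModEq, hmod, hdiv, hone, one_mul, ih] at hlucas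
    rw [hlucas, pow_succ]
    split_ifs <;> omega

theorem choose_two_pow_sub_one_add_choose_mod_two {v w : ℕ} (hwv : w < v) (k : ℕ) :
    (choose (2 ^ w - 1) k + choose (2 ^ v + 2 ^ w - 1) k) % 2 =
      if 2 ^ v ≤ k ∧ k < 2 ^ v + 2 ^ w then 1 else 0 := by
  have hW : 0 < 2 ^ w := Nat.two_pow_pos w
  have hWV : 2 ^ w < 2 ^ v := Nat.pow_lt_pow_right (by norm_num) hwv
  have hblock : choose (2 ^ v + 2 ^ w - 1) k % 2 =
      choose 1 (k / 2 ^ v) * choose (2 ^ w - 1) (k % 2 ^ v) % 2 := by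
    have h := choose_pow_mul_add_modEq (p := 2) v 1 (k / 2 ^ v) (s := 2 ^ w - 1)
      (by omega) (Nat.mod_lt k (Nat.two_pow_pos v))
    rwa [mul_one, Nat.div_add_mod, ← Nat.add_sub_assoc hW] at h
  rw [Nat.add_mod, hblock, choose_two_pow_sub_one_mod_two]
  rcases lt_or_ge k (2 ^ v) with hk | hk
  · rw [Nat.div_eq_of_lt hk, Nat.mod_eq_of_lt hk, choose_zero_right, one_mul,
      choose_two_pow_sub_one_mod_two]
    split_ifs <;> omega
  have hV2 : 2 ^ (v + 1) = 2 * 2 ^ v := by ring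
  rcases lt_or_ge k (2 ^ (v + 1)) with hk' | hk'
  · have hq : k / 2 ^ v = 1 := Nat.div_eq_of_lt_le (by omega) (by omega)
    have hr : k % 2 ^ v = k - 2 ^ v := by
      have := Nat.div_add_mod k (2 ^ v)
      rw [hq] at this
      omega
    rw [hq, hr, choose_one_right, one_mul, choose_two_pow_sub_one_mod_two]
    split_ifs <;> omega
  · rw [choose_eq_zero_of_lt (n := 1) ((Nat.le_div_iff_mul_le (Nat.two_pow_pos v)).2 (by omega))]
    split_ifs <;> omega

end Nat

theorem bit_two_pow_add_two_pow {a b : ℕ} (hba : b < a) {j : ℕ} (hj : 1 ≤ j) :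
    bit (2 ^ a + 2 ^ b) j = (if j = a + 1 then 1 else 0) + (if j = b + 1 then 1 else 0) := by
  have hlt : 2 ^ b < 2 ^ a := Nat.pow_lt_pow_right (by norm_num) hba
  rw [bit, add_comm, ← Nat.or_two_pow_eq_add_of_lt hlt, Nat.testBit_or, Nat.testBit_two_pow,
    Nat.testBit_two_pow]
  by_cases hja : j = a + 1 <;> by_cases hjb : j = b + 1 <;> simp [hja, hjb] <;> omega

theorem sum_bit_two_pow_add_two_pow_mul {M : Type*} [NonAssocSemiring M] {a b m : ℕ}
    (hba : b < a) (ham : a + 1 ≤ m) (c : ℕ → M) :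
    ∑ j ∈ Icc 1 m, (bit (2 ^ a + 2 ^ b) j : M) * c j = c (a + 1) + c (b + 1) := by
  rw [sum_congr rfl fun j hj => by
    rw [bit_two_pow_add_two_pow hba (mem_Icc.1 hj).1, Nat.cast_add, add_mul]]
  simp only [Nat.cast_ite, Nat.cast_one, Nat.cast_zero, ite_mul, one_mul, zero_mul,
    sum_add_distrib, sum_ite_eq', mem_Icc]
  rw [if_pos (by omega), if_pos (by omega)]

theorem phi_two_pow_add_two_pow {a b m : ℕ} (hba : b < a) (ham : a + 1 ≤ m) :
    phi m (2 ^ a + 2 ^ b) = (2 : ℝ) ^ (-((a + 1 : ℕ) : ℤ)) + (2 : ℝ) ^ (-((b + 1 : ℕ) : ℤ)) :=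
  sum_bit_two_pow_add_two_pow_mul hba ham _

theorem pbit_two_pow_add_two_pow {a b m : ℕ} (hba : b < a) (ham : a + 1 ≤ m) (i : ℕ) :
    pbit m (2 ^ a + 2 ^ b) i = (Nat.choose a (i - 1) + Nat.choose b (i - 1)) % 2 := by
  have h := sum_bit_two_pow_add_two_pow_mul hba ham (fun j => Nat.choose (j - 1) (i - 1) % 2)
  simp only [Nat.cast_id, Nat.add_sub_cancel] at h
  rw [pbit, sum_congr rfl fun j _ => mul_comm _ _, h, ← Nat.add_mod]

theorem phiP_eq_sum_filter (m n : ℕ) :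
    phiP m n = ∑ i ∈ Icc 1 m with pbit m n i = 1, (2 : ℝ) ^ (-(i : ℤ)) := by
  rw [phiP, sum_filter]
  refine sum_congr rfl fun i _ => ?_
  have : pbit m n i < 2 := Nat.mod_lt _ two_pos
  interval_cases pbit m n i <;> simp

theorem sum_Icc_two_zpow_neg (A B : ℕ) :
    ∑ i ∈ Icc (A + 1) (A + B), (2 : ℝ) ^ (-(i : ℤ)) = 2 ^ (-(A : ℤ)) - 2 ^ (-(A : ℤ) - B) := by
  induction B with
  | zero => simp
  | succ B ih =>
    rw [← add_assoc, sum_Icc_succ_top (by omega), ih]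
    have h : (2 : ℝ) ^ (-(A : ℤ) - B) = 2 * 2 ^ (-(A : ℤ) - (B + 1 : ℕ)) := by
      rw [← zpow_one_add₀ two_ne_zero]; push_cast; ring_nf
    push_cast at h ⊢
    rw [h, show -((A : ℤ) + B + 1) = -(A : ℤ) - (B + 1) by ring]
    ring

theorem stmt_12 (v w m : ℕ) (hvw : w < v) (hm : 2 ^ v + 2 ^ w ≤ m) :
    sobol m (2 ^ (2 ^ v + 2 ^ w - 1) + 2 ^ (2 ^ w - 1)) =
      ((2:ℝ) ^ (-(2 ^ w : ℤ)) + (2:ℝ) ^ (-(2 ^ v : ℤ) - (2 ^ w : ℤ)),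
       (2:ℝ) ^ (-(2 ^ v : ℤ)) - (2:ℝ) ^ (-(2 ^ v : ℤ) - (2 ^ w : ℤ))) := by
  have hW : 1 ≤ 2 ^ w := Nat.one_le_two_pow
  have hWV : 2 ^ w < 2 ^ v := Nat.pow_lt_pow_right (by norm_num) hvw
  have hba : 2 ^ w - 1 < 2 ^ v + 2 ^ w - 1 := by omega
  have ham : 2 ^ v + 2 ^ w - 1 + 1 ≤ m := by omega
  have hdigits : {i ∈ Icc 1 m | pbit m (2 ^ (2 ^ v + 2 ^ w - 1) + 2 ^ (2 ^ w - 1)) i = 1} =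
      Icc (2 ^ v + 1) (2 ^ v + 2 ^ w) := by
    ext i
    rw [mem_filter, mem_Icc, mem_Icc, pbit_two_pow_add_two_pow hba ham, add_comm,
      Nat.choose_two_pow_sub_one_add_choose_mod_two hvw]
    grind
  refine Prod.ext ?_ ?_
  · rw [sobol, phi_two_pow_add_two_pow hba ham, Nat.sub_add_cancel hW,
      Nat.sub_add_cancel (show 1 ≤ 2 ^ v + 2 ^ w by omega), add_comm]
    push_cast
    ring_nf
  · rw [sobol, phiP_eq_sum_filter, hdigits, sum_Icc_two_zpow_neg]
    push_cast
    ring_nf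
end
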